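/- arXiv:1808.03511 — 3 statements merged into one kernel-verified Lean document; each statement's English description precedes it below -/
import Mathlib

section
/- Let ℰ be an exact category with enough projectives, let 𝒳 be a d-cluster tilting subcategory of the stable category ℰ̲, and set ℳ = {E ∈ ℰ : E̲ ∈ 𝒳}. Then for all M, M' ∈ ℳ, Ext^i_ℰ(M, M') = 0 for 1 ≤ i ≤ d−1. -/
open CategoryTheory CategoryTheory.Limits ZeroObject

universe w w' v u

namespace Paper

variable (C : Type u) [Category.{v} C] [Preadditive C] [HasZeroObject C] [HasBinaryBiproducts C]

/-- A Quillen exact structure on an additive category: a class of distinguished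
kernel-cokernel pairs (`ses f g` meaning `0 → X → Y → Z → 0` is a conflation)
satisfying the axioms of exact categories. -/
structure ExactStructure where
  ses : ∀ ⦃X Y Z : C⦄, (X ⟶ Y) → (Y ⟶ Z) → Prop
  comp_zero : ∀ ⦃X Y Z : C⦄ {f : X ⟶ Y} {g : Y ⟶ Z}, ses f g → f ≫ g = 0
  isKernel : ∀ ⦃X Y Z : C⦄ {f : X ⟶ Y} {g : Y ⟶ Z} (h : ses f g),
      Nonempty (IsLimit (KernelFork.ofι f (comp_zero h)))
  isCokernel : ∀ ⦃X Y Z : C⦄ {f : X ⟶ Y} {g : Y ⟶ Z} (h : ses f g),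
      Nonempty (IsColimit (CokernelCofork.ofπ g (comp_zero h)))
  ses_id_zero : ∀ X : C, ses (𝟙 X) (0 : X ⟶ 0)
  ses_zero_id : ∀ X : C, ses (0 : (0 : C) ⟶ X) (𝟙 X)
  ses_split : ∀ X Y : C, ses (biprod.inl : X ⟶ X ⊞ Y) (biprod.snd : X ⊞ Y ⟶ Y)
  infl_comp : ∀ ⦃X Y Z : C⦄ {f : X ⟶ Y} {g : Y ⟶ Z},
      (∃ (U : C) (u : Y ⟶ U), ses f u) → (∃ (V : C) (v : Z ⟶ V), ses g v) →
      ∃ (W : C) (w : Z ⟶ W), ses (f ≫ g) w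
  defl_comp : ∀ ⦃X Y Z : C⦄ {f : X ⟶ Y} {g : Y ⟶ Z},
      (∃ (U : C) (u : U ⟶ X), ses u f) → (∃ (V : C) (v : V ⟶ Y), ses v g) →
      ∃ (W : C) (w : W ⟶ X), ses w (f ≫ g)
  pushout_infl : ∀ ⦃X Y Z : C⦄ (f : X ⟶ Y) (g : X ⟶ Z),
      (∃ (U : C) (u : Y ⟶ U), ses f u) →
      ∃ (W : C) (h : Y ⟶ W) (k : Z ⟶ W), (∃ (V : C) (v : W ⟶ V), ses k v) ∧ IsPushout f g h k
  pullback_defl : ∀ ⦃X Y Z : C⦄ (f : Y ⟶ X) (g : Z ⟶ X),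
      (∃ (U : C) (u : U ⟶ Y), ses u f) →
      ∃ (W : C) (h : W ⟶ Y) (k : W ⟶ Z), (∃ (V : C) (v : V ⟶ W), ses v h) ∧ IsPullback h k f g

variable {C}

/-- Admissible monomorphisms. -/
def ExactStructure.Inflation (E : ExactStructure C) {X Y : C} (f : X ⟶ Y) : Prop :=
  ∃ (Z : C) (g : Y ⟶ Z), E.ses f g

/-- Admissible epimorphisms. -/
def ExactStructure.Deflation (E : ExactStructure C) {Y Z : C} (g : Y ⟶ Z) : Prop :=
  ∃ (X : C) (f : X ⟶ Y), E.ses f g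

/-- Projective objects with respect to an exact structure. -/
def ExactStructure.Proj (E : ExactStructure C) (P : C) : Prop :=
  ∀ ⦃Y Z : C⦄ (g : Y ⟶ Z), E.Deflation g → ∀ h : P ⟶ Z, ∃ k : P ⟶ Y, k ≫ g = h

/-- The exact category has enough projectives. -/
def EnoughProj (E : ExactStructure C) : Prop :=
  ∀ X : C, ∃ (P : C) (p : P ⟶ X), E.Proj P ∧ E.Deflation p

/-- The stable relation: two morphisms are identified iff their difference factors
through a projective object. -/
def stableRel (E : ExactStructure C) : HomRel C := fun {X Y} f g =>
  ∃ (P : C) (a : X ⟶ P) (b : P ⟶ Y), E.Proj P ∧ a ≫ b = f - g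

/-- The stable category `ℰ/𝒫`. -/
abbrev St (E : ExactStructure C) := CategoryTheory.Quotient (stableRel E)

/-- The projection functor `ℰ → ℰ/𝒫`. -/
def stq (E : ExactStructure C) : C ⥤ St E := Quotient.functor _

end Paper

namespace Paper

variable {C : Type u} [Category.{v} C] [Preadditive C] [HasZeroObject C] [HasBinaryBiproducts C]

/-- An `n`-fold Yoneda extension `0 → B → X_n → ⋯ → X_1 → A → 0`, encoded
recursively by splicing off the leftmost conflation. -/
inductive NExt (E : ExactStructure C) : ℕ → C → C → Type (max u v)
  | one {A B Y : C} (f : B ⟶ Y) (g : Y ⟶ A) (h : E.ses f g) : NExt E 1 A B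
  | step {A B K Y : C} {n : ℕ} (f : B ⟶ Y) (g : Y ⟶ K) (h : E.ses f g)
      (ξ : NExt E n A K) : NExt E (n + 1) A B

/-- Morphisms of Yoneda extensions over given maps on the two end objects. -/
inductive NExtMor (E : ExactStructure C) :
    ∀ {n : ℕ} {A A' B B' : C}, (B ⟶ B') → (A ⟶ A') → NExt E n A B → NExt E n A' B' → Prop
  | one {A A' B B' Y Y' : C} {β : B ⟶ B'} {α : A ⟶ A'}
      {f : B ⟶ Y} {g : Y ⟶ A} {h : E.ses f g}
      {f' : B' ⟶ Y'} {g' : Y' ⟶ A'} {h' : E.ses f' g'}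
      (y : Y ⟶ Y') (hy₁ : f ≫ y = β ≫ f') (hy₂ : y ≫ g' = g ≫ α) :
      NExtMor E β α (NExt.one f g h) (NExt.one f' g' h')
  | step {n : ℕ} {A A' B B' K K' Y Y' : C} {β : B ⟶ B'} {α : A ⟶ A'}
      {f : B ⟶ Y} {g : Y ⟶ K} {h : E.ses f g} {ξ : NExt E n A K}
      {f' : B' ⟶ Y'} {g' : Y' ⟶ K'} {h' : E.ses f' g'} {ξ' : NExt E n A' K'}
      (y : Y ⟶ Y') (k : K ⟶ K') (hy₁ : f ≫ y = β ≫ f') (hy₂ : y ≫ g' = g ≫ k)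
      (tail : NExtMor E k α ξ ξ') :
      NExtMor E β α (NExt.step f g h ξ) (NExt.step f' g' h' ξ')

/-- Yoneda equivalence of `n`-extensions: the equivalence relation generated by
morphisms of extensions which are the identity on both end objects. -/
def ExtEquiv (E : ExactStructure C) {n : ℕ} {A B : C} (ξ ξ' : NExt E n A B) : Prop :=
  Relation.EqvGen (fun a b => NExtMor E (𝟙 B) (𝟙 A) a b) ξ ξ'

/-- The trivial `(n+1)`-extension of `A` by the zero object. -/
noncomputable def trivN (E : ExactStructure C) : (n : ℕ) → (A : C) → NExt E (n + 1) A (0 : C)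
  | 0, A => NExt.one (0 : (0 : C) ⟶ A) (𝟙 A) (E.ses_zero_id A)
  | n + 1, A => NExt.step (𝟙 (0 : C)) (0 : (0 : C) ⟶ (0 : C)) (E.ses_id_zero (0 : C)) (trivN E n A)

/-- The trivial (split) `(n+1)`-extension of `A` by `B`. -/
noncomputable def trivExt (E : ExactStructure C) : (n : ℕ) → (A B : C) → NExt E (n + 1) A B
  | 0, A, B => NExt.one (biprod.inl : B ⟶ B ⊞ A) (biprod.snd : B ⊞ A ⟶ A) (E.ses_split B A)
  | n + 1, A, B => NExt.step (𝟙 B) (0 : B ⟶ (0 : C)) (E.ses_id_zero B) (trivN E n A)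

/-- `extVanish E n A B` means `Ext^n_ℰ(A, B) = 0`: every `n`-fold Yoneda extension
of `A` by `B` is Yoneda-equivalent to the trivial one. -/
def extVanish (E : ExactStructure C) : ℕ → C → C → Prop
  | 0, _, _ => True
  | n + 1, A, B => ∀ ξ : NExt E (n + 1) A B, ExtEquiv E ξ (trivExt E n A B)

/-- `MRes E M n X` : there is an exact sequence `0 → M_n → ⋯ → M_1 → X → 0`
with all `M_j ∈ M`. -/
inductive MRes (E : ExactStructure C) (M : Set C) : ℕ → C → Prop
  | iso {X M₀ : C} (hM : M₀ ∈ M) (f : M₀ ⟶ X) (hf : IsIso f) : MRes E M 1 X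
  | step {X K M₀ : C} {n : ℕ} (hM : M₀ ∈ M) (i : K ⟶ M₀) (p : M₀ ⟶ X)
      (hses : E.ses i p) (hK : MRes E M n K) : MRes E M (n + 1) X

/-- `CoRes E M n X` : there is an exact sequence `0 → X → M^1 → ⋯ → M^n → 0`
with all `M^j ∈ M`. -/
inductive CoRes (E : ExactStructure C) (M : Set C) : ℕ → C → Prop
  | iso {X M₀ : C} (hM : M₀ ∈ M) (f : X ⟶ M₀) (hf : IsIso f) : CoRes E M 1 X
  | step {X K M₀ : C} {n : ℕ} (hM : M₀ ∈ M) (i : X ⟶ M₀) (p : M₀ ⟶ K)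
      (hses : E.ses i p) (hK : CoRes E M n K) : CoRes E M (n + 1) X

/-- Right `M`-approximations. -/
def RightApprox {D : Type w} [Category.{w'} D] (M : Set D) {M₀ X : D} (f : M₀ ⟶ X) : Prop :=
  ∀ M' ∈ M, ∀ g : M' ⟶ X, ∃ h : M' ⟶ M₀, h ≫ f = g

/-- Left `M`-approximations. -/
def LeftApprox {D : Type w} [Category.{w'} D] (M : Set D) {X M₀ : D} (f : X ⟶ M₀) : Prop :=
  ∀ M' ∈ M, ∀ g : X ⟶ M', ∃ h : M₀ ⟶ M', f ≫ h = g

/-- `d`-cluster tilting subcategory of an exact category (Definition 4.1). -/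
structure ClusterTiltingExact (E : ExactStructure C) (M : Set C) (d : ℕ) : Prop where
  contra : ∀ X : C, ∃ (M₀ : C) (f : M₀ ⟶ X), M₀ ∈ M ∧ RightApprox M f
  cova : ∀ X : C, ∃ (M₀ : C) (f : X ⟶ M₀), M₀ ∈ M ∧ LeftApprox M f
  gen : ∀ X : C, ∃ (M₀ : C) (f : M₀ ⟶ X), M₀ ∈ M ∧ E.Deflation f
  cogen : ∀ X : C, ∃ (M₀ : C) (f : X ⟶ M₀), M₀ ∈ M ∧ E.Inflation f
  eq_left : M = {X : C | ∀ M' ∈ M, ∀ i : ℕ, 1 ≤ i → i + 1 ≤ d → extVanish E i X M'}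
  eq_right : M = {X : C | ∀ M' ∈ M, ∀ i : ℕ, 1 ≤ i → i + 1 ≤ d → extVanish E i M' X}

/-- `dℤ`-cluster tilting subcategory of an exact category: `d`-cluster tilting and
`Ext^i(ℳ,ℳ) = 0` for `i ∉ dℤ`. -/
def ClusterTiltingExactDZ (E : ExactStructure C) (M : Set C) (d : ℕ) : Prop :=
  ClusterTiltingExact E M d ∧
    ∀ M₀ ∈ M, ∀ M₁ ∈ M, ∀ i : ℕ, 0 < i → ¬ (d ∣ i) → extVanish E i M₀ M₁

end Paper

namespace Paper

variable {C : Type u} [Category.{v} C] [Preadditive C] [HasZeroObject C] [HasBinaryBiproducts C]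

/-- Iterated composition power of an endofunctor. -/
def fpow {D : Type w} [Category.{w'} D] (F : D ⥤ D) : ℕ → D ⥤ D
  | 0 => 𝟭 D
  | n + 1 => fpow F n ⋙ F

/-- An `Ω`-sequence `Ω obj₃ → obj₁ → obj₂ → obj₃`. -/
structure LTTriangle (D : Type w) [Category.{w'} D] (Om : D ⥤ D) where
  obj₁ : D
  obj₂ : D
  obj₃ : D
  m₀ : Om.obj obj₃ ⟶ obj₁
  m₁ : obj₁ ⟶ obj₂
  m₂ : obj₂ ⟶ obj₃

/-- Isomorphism of `Ω`-sequences. -/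
def LTTriangle.IsoSeq {D : Type w} [Category.{w'} D] {Om : D ⥤ D}
    (T T' : LTTriangle D Om) : Prop :=
  ∃ (e₁ : T.obj₁ ≅ T'.obj₁) (e₂ : T.obj₂ ≅ T'.obj₂) (e₃ : T.obj₃ ≅ T'.obj₃),
    T.m₀ ≫ e₁.hom = Om.map e₃.hom ≫ T'.m₀ ∧
    T.m₁ ≫ e₂.hom = e₁.hom ≫ T'.m₁ ∧
    T.m₂ ≫ e₃.hom = e₂.hom ≫ T'.m₂

/-- A left triangulated structure on an additive category with endofunctor `Ω`
(Definition 3.1: axioms (T0)–(T5)). -/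
structure LeftTriangStruct (D : Type w) [Category.{w'} D] [Preadditive D] [HasZeroObject D]
    (Om : D ⥤ D) where
  dist : Set (LTTriangle D Om)
  omAdd : Om.Additive
  iso_closed : ∀ T T' : LTTriangle D Om, T ∈ dist → T.IsoSeq T' → T' ∈ dist
  contractible : ∀ X : D, LTTriangle.mk X X 0 0 (𝟙 X) 0 ∈ dist
  complete : ∀ {B Z : D} (w : B ⟶ Z),
      ∃ (A : D) (u : Om.obj Z ⟶ A) (v : A ⟶ B), LTTriangle.mk A B Z u v w ∈ dist
  rotate : ∀ T ∈ dist,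
      LTTriangle.mk (Om.obj T.obj₃) T.obj₁ T.obj₂ (-Om.map T.m₂) T.m₀ T.m₁ ∈ dist
  complete_mor : ∀ T T' : LTTriangle D Om, T ∈ dist → T' ∈ dist →
      ∀ (g : T.obj₂ ⟶ T'.obj₂) (h : T.obj₃ ⟶ T'.obj₃), T.m₂ ≫ h = g ≫ T'.m₂ →
      ∃ f : T.obj₁ ⟶ T'.obj₁, T.m₁ ≫ g = f ≫ T'.m₁ ∧ T.m₀ ≫ f = Om.map h ≫ T'.m₀
  octa : ∀ {A B Cc D₀ E₀ : D} {u : Om.obj Cc ⟶ A} {v : A ⟶ B} {w : B ⟶ Cc}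
      {f : Om.obj D₀ ⟶ E₀} {g : E₀ ⟶ Cc} {h : Cc ⟶ D₀},
      LTTriangle.mk A B Cc u v w ∈ dist → LTTriangle.mk E₀ Cc D₀ f g h ∈ dist →
      ∃ (F : D) (α : A ⟶ F) (i : Om.obj D₀ ⟶ F) (j : F ⟶ B) (β : F ⟶ E₀),
        LTTriangle.mk F B D₀ i j (w ≫ h) ∈ dist ∧
        LTTriangle.mk A F E₀ (Om.map g ≫ u) α β ∈ dist ∧
        u ≫ α = Om.map h ≫ i ∧ α ≫ j = v ∧ j ≫ w = β ≫ g

/-- A chain (tower) of triangles `Ω Z_{j-1} → Z_j → M_j → Z_{j-1}` with all middle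
terms `M_j` in `X`, used to encode `(d+2)`-angles. -/
inductive LTChain {D : Type w} [Category.{w'} D] [Preadditive D] [HasZeroObject D]
    {Om : D ⥤ D} (L : LeftTriangStruct D Om) (X : Set D) : ℕ → D → D → Prop
  | zero (A : D) : LTChain L X 0 A A
  | succ {n : ℕ} {A B B' M : D} (hc : LTChain L X n A B) (hM : M ∈ X)
      (u : Om.obj B ⟶ B') (v : B' ⟶ M) (w : M ⟶ B)
      (ht : LTTriangle.mk B' M B u v w ∈ L.dist) : LTChain L X (n + 1) A B'

/-- `d`-cluster tilting subcategory of a left triangulated category (Definition 5.1). -/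
structure ClusterTiltingLT {D : Type w} [Category.{w'} D] [Preadditive D] [HasZeroObject D]
    {Om : D ⥤ D} (L : LeftTriangStruct D Om) (X : Set D) (d : ℕ) : Prop where
  summand_closed : ∀ {A Z : D}, Z ∈ X → ∀ (s : A ⟶ Z) (r : Z ⟶ A), s ≫ r = 𝟙 A → A ∈ X
  /-- every object admits a `(d+2)`-angle `0 → C → X¹ → ⋯ → X^d → 0` with `Xⁱ ∈ X` -/
  cores : ∀ Cobj : D, ∃ Z₀ : D, IsZero Z₀ ∧ LTChain L X d Z₀ Cobj
  /-- every object admits a `(d+2)`-angle `0 → X_d → ⋯ → X_1 → C → 0` with `X_i ∈ X` -/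
  res : ∀ Cobj : D, ∃ (Z₀ Z₁ W : D) (u : Om.obj Z₀ ⟶ Z₁) (v : Z₁ ⟶ Cobj) (w : Cobj ⟶ Z₀),
      IsZero Z₀ ∧ LTTriangle.mk Z₁ Cobj Z₀ u v w ∈ L.dist ∧
      LTChain L X (d - 1) Z₁ W ∧ W ∈ X
  om_bij : ∀ (Cobj X₀ : D), X₀ ∈ X → ∀ i : ℕ, i + 2 ≤ d →
      Function.Bijective (fun f : (fpow Om i).obj X₀ ⟶ Cobj => Om.map f)
  hom_vanish : ∀ (X₀ X₁ : D), X₀ ∈ X → X₁ ∈ X → ∀ i : ℕ, 1 ≤ i → i + 1 ≤ d →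
      ∀ f : (fpow Om i).obj X₁ ⟶ X₀, f = 0

/-- `dℤ`-cluster tilting subcategory of a left triangulated category:
`d`-cluster tilting and `Ω^d(X) ⊆ X`. -/
def ClusterTiltingLTDZ {D : Type w} [Category.{w'} D] [Preadditive D] [HasZeroObject D]
    {Om : D ⥤ D} (L : LeftTriangStruct D Om) (X : Set D) (d : ℕ) : Prop :=
  ClusterTiltingLT L X d ∧ ∀ A ∈ X, (fpow Om d).obj A ∈ X

/-- A triangle `X → Y → Z → ΣX` for a suspension endofunctor. -/
structure Tri (T : Type w) [Category.{w'} T] (Sf : T ⥤ T) where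
  obj₁ : T
  obj₂ : T
  obj₃ : T
  m₁ : obj₁ ⟶ obj₂
  m₂ : obj₂ ⟶ obj₃
  m₃ : obj₃ ⟶ Sf.obj obj₁

/-- Isomorphism of candidate triangles. -/
def Tri.IsoTri {T : Type w} [Category.{w'} T] {Sf : T ⥤ T} (T₁ T₂ : Tri T Sf) : Prop :=
  ∃ (e₁ : T₁.obj₁ ≅ T₂.obj₁) (e₂ : T₁.obj₂ ≅ T₂.obj₂) (e₃ : T₁.obj₃ ≅ T₂.obj₃),
    T₁.m₁ ≫ e₂.hom = e₁.hom ≫ T₂.m₁ ∧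
    T₁.m₂ ≫ e₃.hom = e₂.hom ≫ T₂.m₂ ∧
    T₁.m₃ ≫ Sf.map e₁.hom = e₃.hom ≫ T₂.m₃

/-- `dist` is a triangulated structure on `T` with suspension the equivalence `Se`
(the classical Verdier axioms TR0–TR4). -/
structure TriangStructOn (T : Type w) [Category.{w'} T] [Preadditive T] [HasZeroObject T]
    (Se : T ≌ T) (dist : Set (Tri T Se.functor)) : Prop where
  iso_closed : ∀ T₁ T₂ : Tri T Se.functor, T₁ ∈ dist → T₁.IsoTri T₂ → T₂ ∈ dist
  id_tri : ∀ X : T, Tri.mk X X 0 (𝟙 X) 0 0 ∈ dist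
  complete : ∀ {X Y : T} (f : X ⟶ Y),
      ∃ (Z : T) (g : Y ⟶ Z) (h : Z ⟶ Se.functor.obj X), Tri.mk X Y Z f g h ∈ dist
  rotate : ∀ T₁ ∈ dist,
      Tri.mk T₁.obj₂ T₁.obj₃ (Se.functor.obj T₁.obj₁) T₁.m₂ T₁.m₃ (-(Se.functor.map T₁.m₁)) ∈ dist
  unrotate : ∀ {X Y Z : T} (f : X ⟶ Y) (g : Y ⟶ Z) (h : Z ⟶ Se.functor.obj X),
      Tri.mk Y Z (Se.functor.obj X) g h (-(Se.functor.map f)) ∈ dist →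
      Tri.mk X Y Z f g h ∈ dist
  complete_mor : ∀ T₁ T₂ : Tri T Se.functor, T₁ ∈ dist → T₂ ∈ dist →
      ∀ (a : T₁.obj₁ ⟶ T₂.obj₁) (b : T₁.obj₂ ⟶ T₂.obj₂), T₁.m₁ ≫ b = a ≫ T₂.m₁ →
      ∃ c : T₁.obj₃ ⟶ T₂.obj₃, T₁.m₂ ≫ c = b ≫ T₂.m₂ ∧ T₁.m₃ ≫ Se.functor.map a = c ≫ T₂.m₃
  octa : ∀ {X Y Z U V W : T} (u : X ⟶ Y) (v : Y ⟶ Z) (a : Y ⟶ U) (a' : U ⟶ Se.functor.obj X)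
      (b : Z ⟶ V) (b' : V ⟶ Se.functor.obj Y) (c : Z ⟶ W) (c' : W ⟶ Se.functor.obj X),
      Tri.mk X Y U u a a' ∈ dist → Tri.mk Y Z V v b b' ∈ dist →
      Tri.mk X Z W (u ≫ v) c c' ∈ dist →
      ∃ (f₁ : U ⟶ W) (f₂ : W ⟶ V),
        Tri.mk U W V f₁ f₂ (b' ≫ Se.functor.map a) ∈ dist ∧
        a ≫ f₁ = v ≫ c ∧ f₁ ≫ c' = a' ∧ c ≫ f₂ = b ∧ f₂ ≫ b' = c' ≫ Se.functor.map u

/-- `d`-cluster tilting subcategory of a category with suspension functor `Sf`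
(the triangulated-sense definition, Definition 4.1 with `Ext^i(X,Y) = Hom(X, Σ^i Y)`). -/
structure ClusterTiltingTri (T : Type w) [Category.{w'} T] [Preadditive T]
    (Sf : T ⥤ T) (M : Set T) (d : ℕ) : Prop where
  contra : ∀ X : T, ∃ (M₀ : T) (f : M₀ ⟶ X), M₀ ∈ M ∧ RightApprox M f
  cova : ∀ X : T, ∃ (M₀ : T) (f : X ⟶ M₀), M₀ ∈ M ∧ LeftApprox M f
  eq_left : M = {Eo : T | ∀ M' ∈ M, ∀ i : ℕ, 1 ≤ i → i + 1 ≤ d →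
      ∀ f : Eo ⟶ (fpow Sf i).obj M', f = 0}
  eq_right : M = {Eo : T | ∀ M' ∈ M, ∀ i : ℕ, 1 ≤ i → i + 1 ≤ d →
      ∀ f : M' ⟶ (fpow Sf i).obj Eo, f = 0}

/-- `dℤ`-cluster tilting subcategory in the triangulated sense:
`d`-cluster tilting and `Σ^d(M) ⊆ M`. -/
def ClusterTiltingTriDZ (T : Type w) [Category.{w'} T] [Preadditive T]
    (Sf : T ⥤ T) (M : Set T) (d : ℕ) : Prop :=
  ClusterTiltingTri T Sf M d ∧ ∀ A ∈ M, (fpow Sf d).obj A ∈ M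

/-- Integer powers of an auto-equivalence. -/
def zpow {T : Type w} [Category.{w'} T] (Se : T ≌ T) : ℤ → T ⥤ T
  | Int.ofNat n => fpow Se.functor n
  | Int.negSucc n => fpow Se.inverse (n + 1)

end Paper

namespace Paper

variable {C : Type u} [Category.{v} C] [Preadditive C] [HasZeroObject C] [HasBinaryBiproducts C]

/-- Raising a morphism `Ω^a X ⟶ Ω^b Y` by applying `F` `j` more times. -/
def raiseN {D : Type w} [Category.{w'} D] (F : D ⥤ D) :
    ∀ (j : ℕ) {X Y : D} {a b : ℕ},
      ((fpow F a).obj X ⟶ (fpow F b).obj Y) → ((fpow F (a + j)).obj X ⟶ (fpow F (b + j)).obj Y)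
  | 0, _, _, _, _, f => f
  | j + 1, _, _, _, _, f => F.map (raiseN F j f)

/-- `S` is (a realization of) the stabilization `ℤD` of the category `D` with respect
to the endofunctor `F`: objects are pairs `(X, n)`, `X ∈ D`, `n ∈ ℤ`, and
`Hom((X,m),(Y,n)) = colim_k Hom(F^{m+k} X, F^{n+k} Y)`.  The data consists of the
objects `obj X n` together with the structure maps `lift` into the colimit, and the
axioms say exactly that the hom groups are the filtered colimits above and that every
object of `S` is isomorphic to some `(X, n)`. -/
structure IsStabilization {D : Type u'} [Category.{v'} D] [Preadditive D] (F : D ⥤ D)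
    (S : Type w) [Category.{w'} S] [Preadditive S] where
  obj : D → ℤ → S
  lift : ∀ {X Y : D} (a b : ℕ) (m n : ℤ), (a : ℤ) + n = (b : ℤ) + m →
      (((fpow F a).obj X) ⟶ ((fpow F b).obj Y)) → (obj X m ⟶ obj Y n)
  lift_raise : ∀ {X Y : D} (a b : ℕ) (m n : ℤ) (h : (a : ℤ) + n = (b : ℤ) + m)
      (h' : ((a + 1 : ℕ) : ℤ) + n = ((b + 1 : ℕ) : ℤ) + m)
      (f : (fpow F a).obj X ⟶ (fpow F b).obj Y),
      lift (a + 1) (b + 1) m n h' (F.map f) = lift a b m n h f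
  lift_id : ∀ {X : D} (a : ℕ) (n : ℤ) (h : (a : ℤ) + n = (a : ℤ) + n),
      lift a a n n h (𝟙 ((fpow F a).obj X)) = 𝟙 (obj X n)
  lift_comp : ∀ {X Y Z : D} (a b c : ℕ) (m n p : ℤ)
      (hab : (a : ℤ) + n = (b : ℤ) + m) (hbc : (b : ℤ) + p = (c : ℤ) + n)
      (hac : (a : ℤ) + p = (c : ℤ) + m)
      (f : (fpow F a).obj X ⟶ (fpow F b).obj Y) (g : (fpow F b).obj Y ⟶ (fpow F c).obj Z),
      lift a b m n hab f ≫ lift b c n p hbc g = lift a c m p hac (f ≫ g)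
  lift_add : ∀ {X Y : D} (a b : ℕ) (m n : ℤ) (h : (a : ℤ) + n = (b : ℤ) + m)
      (f g : (fpow F a).obj X ⟶ (fpow F b).obj Y),
      lift a b m n h (f + g) = lift a b m n h f + lift a b m n h g
  lift_surj : ∀ {X Y : D} {m n : ℤ} (φ : obj X m ⟶ obj Y n),
      ∃ (a b : ℕ) (h : (a : ℤ) + n = (b : ℤ) + m) (f : (fpow F a).obj X ⟶ (fpow F b).obj Y),
        φ = lift a b m n h f
  lift_inj : ∀ {X Y : D} (a b a' b' : ℕ) (m n : ℤ)
      (h : (a : ℤ) + n = (b : ℤ) + m) (h' : (a' : ℤ) + n = (b' : ℤ) + m)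
      (f : (fpow F a).obj X ⟶ (fpow F b).obj Y)
      (f' : (fpow F a').obj X ⟶ (fpow F b').obj Y),
      lift a b m n h f = lift a' b' m n h' f' →
      ∃ (j j' : ℕ), a + j = a' + j' ∧ b + j = b' + j' ∧
        HEq (raiseN F j f) (raiseN F j' f')
  dense : ∀ s : S, ∃ (X : D) (n : ℤ), Nonempty (s ≅ obj X n)

/-- The subcategory `dℤ𝒳` of the stabilization: all objects isomorphic to some
`(X, dk)` with `X ∈ 𝒳`, `k ∈ ℤ`. -/
def dZSet {D : Type u'} [Category.{v'} D] [Preadditive D] {F : D ⥤ D}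
    {S : Type w} [Category.{w'} S] [Preadditive S] (st : IsStabilization F S)
    (X : Set D) (d : ℕ) : Set S :=
  {s | ∃ (A : D) (k : ℤ), A ∈ X ∧ Nonempty (s ≅ st.obj A ((d : ℤ) * k))}

/-- The standard triangles of the stabilization of a left triangulated category:
those induced by a sequence in `D` whose sign-twist by `(-1)^k` is a triangle. -/
def stdTriangles {D : Type u'} [Category.{v'} D] [Preadditive D] [HasZeroObject D]
    {Om : D ⥤ D} (L : LeftTriangStruct D Om)
    {S : Type w} [Category.{w'} S] [Preadditive S] (st : IsStabilization Om S)
    (Se : S ≌ S) (σ : ∀ (A : D) (n : ℤ), Se.functor.obj (st.obj A n) ≅ st.obj A (n - 1)) :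
    Set (Tri S Se.functor) :=
  {T | ∃ (C₁ C₂ C₃ : D) (n₁ n₂ n₃ k : ℤ) (a₁ a₂ a₃ : ℕ),
    (a₁ : ℤ) = n₁ + k ∧ (a₂ : ℤ) = n₂ + k ∧ (a₃ : ℤ) = n₃ + k ∧
    ∃ (u : (fpow Om (a₁ + 1)).obj C₁ ⟶ (fpow Om a₃).obj C₃)
      (v : (fpow Om a₃).obj C₃ ⟶ (fpow Om a₂).obj C₂)
      (w : (fpow Om a₂).obj C₂ ⟶ (fpow Om a₁).obj C₁)
      (h₁ : (a₃ : ℤ) + n₂ = (a₂ : ℤ) + n₃) (h₂ : (a₂ : ℤ) + n₁ = (a₁ : ℤ) + n₂)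
      (h₃ : ((a₁ + 1 : ℕ) : ℤ) + (n₃ - 1) = (a₃ : ℤ) + n₁),
      LTTriangle.mk ((fpow Om a₃).obj C₃) ((fpow Om a₂).obj C₂) ((fpow Om a₁).obj C₁)
        (((k.negOnePow : ℤˣ) : ℤ) • u) (((k.negOnePow : ℤˣ) : ℤ) • v)
        (((k.negOnePow : ℤˣ) : ℤ) • w) ∈ L.dist ∧
      T = Tri.mk (st.obj C₃ n₃) (st.obj C₂ n₂) (st.obj C₁ n₁)
            (st.lift a₃ a₂ n₃ n₂ h₁ v) (st.lift a₂ a₁ n₂ n₁ h₂ w)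
            (st.lift (a₁ + 1) a₃ n₁ (n₃ - 1) h₃ u ≫ (σ C₃ n₃).inv)}

/-- The syzygy functor `Ω` on the stable category, together with its defining data:
for each object a chosen conflation `0 → K X → P X → X → 0` with `P X` projective,
identifications `Ω(X̲) ≅ K X`, and the characterization of `Ω` on morphisms by
lifting along these conflations. -/
structure SyzygyFunctor (E : ExactStructure C) where
  Om : St E ⥤ St E
  P : C → C
  projP : ∀ X : C, E.Proj (P X)
  K : C → C
  i : ∀ X : C, K X ⟶ P X
  p : ∀ X : C, P X ⟶ X
  sesX : ∀ X : C, E.ses (i X) (p X)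
  iso : ∀ X : C, Om.obj ((stq E).obj X) ≅ (stq E).obj (K X)
  map_spec : ∀ {X Y : C} (f : X ⟶ Y) (g : P X ⟶ P Y) (k : K X ⟶ K Y),
      g ≫ p Y = p X ≫ f → i X ≫ g = k ≫ i Y →
      Om.map ((stq E).map f) = (iso X).hom ≫ (stq E).map k ≫ (iso Y).inv

/-- The standard triangles of the stable category of an exact category with enough
projectives (Theorem 3.2): `Ω E₁ → E₃ → E₂ → E₁` induced by a conflation
`0 → E₃ → E₂ → E₁ → 0` and a lift of diagrams against `0 → K E₁ → P E₁ → E₁ → 0`. -/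
def stdStableTriangles (E : ExactStructure C) (SF : SyzygyFunctor E) :
    Set (LTTriangle (St E) SF.Om) :=
  {T | ∃ (E₁ E₂ E₃ : C) (v : E₃ ⟶ E₂) (w : E₂ ⟶ E₁) (_ : E.ses v w)
      (u : SF.K E₁ ⟶ E₃) (g : SF.P E₁ ⟶ E₂),
      SF.i E₁ ≫ g = u ≫ v ∧ g ≫ w = SF.p E₁ ∧
      (LTTriangle.mk ((stq E).obj E₃) ((stq E).obj E₂) ((stq E).obj E₁)
        ((SF.iso E₁).hom ≫ (stq E).map u) ((stq E).map v) ((stq E).map w)).IsoSeq T}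

/-- Gorenstein projective objects: cycles of totally acyclic complexes of projectives.
The totally acyclic complex is encoded by its sequence of conflations
`0 → G_i → P_i → G_{i-1} → 0` with `P_i` projective, together with the condition that
each map `G_i → Q` to a projective extends to `P_i` (i.e. `Hom(P_•, Q)` is acyclic). -/
def GorensteinProj (E : ExactStructure C) (G : C) : Prop :=
  ∃ (Gs Ps : ℤ → C) (g : ∀ i : ℤ, Gs i ⟶ Ps i) (p : ∀ i : ℤ, Ps i ⟶ Gs (i - 1)),
    Gs 0 = G ∧ ∀ i : ℤ, E.Proj (Ps i) ∧ E.ses (g i) (p i) ∧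
      (∀ Q : C, E.Proj Q → ∀ f : Gs i ⟶ Q, ∃ h : Ps i ⟶ Q, g i ≫ h = f)

/-- `Syz E n X W` : `W` is an `n`-th syzygy of `X`, i.e. there is a chain of
conflations `0 → K_{j+1} → P_j → K_j → 0` with each `P_j` projective, `K_0 = X`,
`K_n = W`. -/
inductive Syz (E : ExactStructure C) : ℕ → C → C → Prop
  | zero (X : C) : Syz E 0 X X
  | succ {n : ℕ} {X K W P : C} (h : Syz E n X K) (hP : E.Proj P) (w : W ⟶ P) (p : P ⟶ K)
      (hs : E.ses w p) : Syz E (n + 1) X W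

/-- `X` has finite Gorenstein projective dimension: some syzygy `Ω^n(X̲)` is
(stably isomorphic to) a Gorenstein projective object. -/
def FiniteGPdim (E : ExactStructure C) (X : C) : Prop :=
  ∃ (n : ℕ) (W G : C), Syz E n X W ∧ GorensteinProj E G ∧
    Nonempty ((stq E).obj W ≅ (stq E).obj G)

end Paper

/-! Every `(n+1)`-extension of `M₀` by `M₁` receives a morphism from the projective-resolution
extension `0 → Ωⁿ⁺¹M₀ → Pₙ → ⋯ → P₀ → M₀ → 0`, restricting to some `u : Ωⁿ⁺¹M₀ → M₁`, and it is
equivalent to the split extension as soon as `u` extends along `Ωⁿ⁺¹M₀ → Pₙ`. For `n + 2 ≤ d`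
the map `u` vanishes in `ℰ̲` because `Hom(Ωⁿ⁺¹𝒳, 𝒳) = 0`, so it factors through a projective
`R`. Pushing the syzygy conflation out along `Ωⁿ⁺¹M₀ → R` gives a conflation `R → W → Ωⁿ M₀`
whose image under `Ω` splits in `ℰ̲` since `R̲ = 0`; as `Ω` is bijective on `Hom(Ωⁿ M₀, -)`,
the deflation itself splits up to projectives, hence splits, and the retraction `W → R`
provides the extension of `u`. -/

namespace Paper

section ExactCategory

variable {C : Type u} [Category.{v} C] [Preadditive C] [HasZeroObject C] [HasBinaryBiproducts C]
  (E : ExactStructure C)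

lemma ExactStructure.proj_zero : E.Proj (0 : C) :=
  fun _ _ _ _ _ => ⟨0, (isZero_zero C).eq_of_src _ _⟩

lemma ExactStructure.proj_biprod {P Q : C} (hP : E.Proj P) (hQ : E.Proj Q) :
    E.Proj (P ⊞ Q) := by
  intro Y Z g hg h
  obtain ⟨k₁, hk₁⟩ := hP g hg (biprod.inl ≫ h)
  obtain ⟨k₂, hk₂⟩ := hQ g hg (biprod.inr ≫ h)
  exact ⟨biprod.desc k₁ k₂, by apply biprod.hom_ext' <;> simp [hk₁, hk₂]⟩

instance stableRel_congruence : Congruence (stableRel E) where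
  equivalence :=
    { refl := fun _ => ⟨0, 0, 0, E.proj_zero, by simp⟩
      symm := by
        rintro f g ⟨P, a, b, hP, hab⟩
        exact ⟨P, -a, b, hP, by rw [Preadditive.neg_comp, hab, neg_sub]⟩
      trans := by
        rintro f g h ⟨P, a, b, hP, hab⟩ ⟨P', a', b', hP', hab'⟩
        refine ⟨P ⊞ P', biprod.lift a a', biprod.desc b b', E.proj_biprod hP hP', ?_⟩
        rw [biprod.lift_desc, hab, hab']
        abel }
  comp_left := by
    rintro X Y Z f g g' ⟨P, a, b, hP, hab⟩
    exact ⟨P, f ≫ a, b, hP, by rw [Category.assoc, hab, Preadditive.comp_sub]⟩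
  comp_right := by
    rintro X Y Z f f' g ⟨P, a, b, hP, hab⟩
    exact ⟨P, a, b ≫ g, hP, by rw [← Category.assoc, hab, Preadditive.sub_comp]⟩

instance stq_full : (stq E).Full := Quotient.full_functor _

lemma stq_map_eq_iff {X Y : C} (f g : X ⟶ Y) : (stq E).map f = (stq E).map g ↔ stableRel E f g :=
  Quotient.functor_map_eq_iff _ f g

variable {E}

lemma ExactStructure.ses_epi_cancel {X Y Z T : C} {f : X ⟶ Y} {g : Y ⟶ Z} (h : E.ses f g)
    {a b : Z ⟶ T} (hab : g ≫ a = g ≫ b) : a = b :=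
  Cofork.IsColimit.hom_ext (E.isCokernel h).some (by simpa using hab)

lemma ExactStructure.ses_mono_cancel {X Y Z T : C} {f : X ⟶ Y} {g : Y ⟶ Z} (h : E.ses f g)
    {a b : T ⟶ X} (hab : a ≫ f = b ≫ f) : a = b :=
  Fork.IsLimit.hom_ext (E.isKernel h).some (by simpa using hab)

lemma ExactStructure.ses_lift {X Y Z T : C} {f : X ⟶ Y} {g : Y ⟶ Z} (h : E.ses f g)
    (t : T ⟶ Y) (ht : t ≫ g = 0) : ∃ l : T ⟶ X, l ≫ f = t := by
  obtain ⟨l, hl⟩ := KernelFork.IsLimit.lift' (E.isKernel h).some t ht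
  exact ⟨l, by simpa using hl⟩

lemma ExactStructure.ses_desc {X Y Z T : C} {f : X ⟶ Y} {g : Y ⟶ Z} (h : E.ses f g)
    (t : Y ⟶ T) (ht : f ≫ t = 0) : ∃ l : Z ⟶ T, g ≫ l = t := by
  obtain ⟨l, hl⟩ := CokernelCofork.IsColimit.desc' (E.isCokernel h).some t ht
  exact ⟨l, by simpa using hl⟩

lemma ExactStructure.exists_retraction_of_section {R W V : C} {k : R ⟶ W} {v : W ⟶ V}
    (hkv : E.ses k v) {σ : V ⟶ W} (hσ : σ ≫ v = 𝟙 V) : ∃ r : W ⟶ R, k ≫ r = 𝟙 R := by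
  obtain ⟨r, hr⟩ := E.ses_lift hkv (𝟙 W - v ≫ σ) (by simp [hσ])
  refine ⟨r, E.ses_mono_cancel hkv ?_⟩
  rw [Category.assoc, hr, Preadditive.comp_sub, ← Category.assoc, E.comp_zero hkv]
  simp

lemma ExactStructure.exists_section_of_stq_map_eq {R W V : C} {k : R ⟶ W} {v : W ⟶ V}
    (hkv : E.ses k v) {σ : V ⟶ W} (hσ : (stq E).map (σ ≫ v) = (stq E).map (𝟙 V)) :
    ∃ σ' : V ⟶ W, σ' ≫ v = 𝟙 V := by
  obtain ⟨Q, a, b, hQ, hab⟩ := (stq_map_eq_iff E _ _).mp hσ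
  obtain ⟨b', hb'⟩ := hQ v ⟨R, k, hkv⟩ b
  exact ⟨σ - a ≫ b', by rw [Preadditive.sub_comp, Category.assoc, hb', hab, sub_sub_cancel]⟩

lemma ExactStructure.exists_ses_pushout {K P N R : C} {i : K ⟶ P} {p : P ⟶ N} (hip : E.ses i p)
    (c : K ⟶ R) : ∃ (W V : C) (h : P ⟶ W) (k : R ⟶ W) (v : W ⟶ V),
      E.ses k v ∧ i ≫ h = c ≫ k ∧ Nonempty (N ≅ V) := by
  obtain ⟨W, h, k, ⟨V, v, hkv⟩, hpo⟩ := E.pushout_infl i c ⟨N, p, hip⟩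
  obtain ⟨ζ, hζ⟩ := E.ses_desc hip (h ≫ v)
    (by rw [← Category.assoc, hpo.w, Category.assoc, E.comp_zero hkv, Limits.comp_zero])
  let π : W ⟶ N := hpo.desc p 0 (by rw [E.comp_zero hip, Limits.comp_zero])
  have hkπ : k ≫ π = 0 := hpo.inr_desc _ _ _
  obtain ⟨ζ', hζ'⟩ := E.ses_desc hkv π hkπ
  have hπζ : π ≫ ζ = v := hpo.hom_ext (by rw [hpo.inl_desc_assoc, hζ])
    (by rw [reassoc_of% hkπ, zero_comp, E.comp_zero hkv])
  refine ⟨W, V, h, k, v, hkv, hpo.w, ⟨⟨ζ, ζ', ?_, ?_⟩⟩⟩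
  · exact E.ses_epi_cancel hip (by rw [reassoc_of% hζ, hζ', hpo.inl_desc, Category.comp_id])
  · exact E.ses_epi_cancel hkv (by rw [reassoc_of% hζ', hπζ, Category.comp_id])

lemma ExactStructure.exists_lift_of_extends {K P N B Y Z : C} {i : K ⟶ P} {p : P ⟶ N}
    (hip : E.ses i p) {f : B ⟶ Y} {g : Y ⟶ Z} (hfg : E.ses f g) {q : P ⟶ Y} {u : K ⟶ B}
    {α : N ⟶ Z} (hq₁ : i ≫ q = u ≫ f) (hq₂ : q ≫ g = p ≫ α) {g' : P ⟶ B} (hg' : i ≫ g' = u) :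
    ∃ s : N ⟶ Y, s ≫ g = α := by
  obtain ⟨s, hs⟩ := E.ses_desc hip (q - g' ≫ f)
    (by rw [Preadditive.comp_sub, reassoc_of% hg', hq₁, sub_self])
  refine ⟨s, E.ses_epi_cancel hip ?_⟩
  rw [reassoc_of% hs, Preadditive.sub_comp, Category.assoc, E.comp_zero hfg, Limits.comp_zero,
    sub_zero, hq₂]

lemma ExactStructure.biprod_desc_comp {B Y Z N : C} {f : B ⟶ Y} {g : Y ⟶ Z} (hfg : E.ses f g)
    {s : N ⟶ Y} {α : N ⟶ Z} (hs : s ≫ g = α) : biprod.desc f s ≫ g = biprod.snd ≫ α := by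
  apply biprod.hom_ext' <;> simp [E.comp_zero hfg, hs]

end ExactCategory

section Syzygy

variable {C : Type u} [Category.{v} C] [Preadditive C] [HasZeroObject C] [HasBinaryBiproducts C]
  {E : ExactStructure C}

/-- The syzygy `Ωⁿ X` built from the conflations chosen by `SF`. -/
def SyzygyFunctor.Kpow (SF : SyzygyFunctor E) : ℕ → C → C
  | 0, X => X
  | n + 1, X => SF.K (SF.Kpow n X)

/-- The projective-resolution extension `0 → Ωⁿ⁺¹A → Pₙ → ⋯ → P₀ → A → 0`. -/
def SyzygyFunctor.resExt (SF : SyzygyFunctor E) (A : C) :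
    (n : ℕ) → NExt E (n + 1) A (SF.Kpow (n + 1) A)
  | 0 => NExt.one (SF.i A) (SF.p A) (SF.sesX A)
  | n + 1 => NExt.step (SF.i (SF.Kpow (n + 1) A)) (SF.p (SF.Kpow (n + 1) A))
      (SF.sesX (SF.Kpow (n + 1) A)) (SF.resExt A n)

lemma SyzygyFunctor.nExtMor_resExt_trivN (SF : SyzygyFunctor E) (A : C) : ∀ n : ℕ,
    NExtMor E (0 : SF.Kpow (n + 1) A ⟶ (0 : C)) (𝟙 A) (SF.resExt A n) (trivN E n A)
  | 0 => NExtMor.one (SF.p A) ((E.comp_zero (SF.sesX A)).trans zero_comp.symm)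
      (by rw [Category.comp_id])
  | n + 1 => NExtMor.step 0 0 ((isZero_zero C).eq_of_tgt _ _) ((isZero_zero C).eq_of_tgt _ _)
      (SF.nExtMor_resExt_trivN A n)

lemma SyzygyFunctor.exists_hom_sesX (SF : SyzygyFunctor E) {N B Y Z : C} {f : B ⟶ Y}
    {g : Y ⟶ Z} (hfg : E.ses f g) (α : N ⟶ Z) :
    ∃ (q : SF.P N ⟶ Y) (u : SF.K N ⟶ B), SF.i N ≫ q = u ≫ f ∧ q ≫ g = SF.p N ≫ α := by
  obtain ⟨q, hq⟩ := SF.projP N g ⟨B, f, hfg⟩ (SF.p N ≫ α)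
  obtain ⟨u, hu⟩ := E.ses_lift hfg (SF.i N ≫ q)
    (by rw [Category.assoc, hq, ← Category.assoc, E.comp_zero (SF.sesX N), zero_comp])
  exact ⟨q, u, hu.symm, hq⟩

lemma SyzygyFunctor.exists_nExtMor_resExt (SF : SyzygyFunctor E) (A : C) :
    ∀ {n : ℕ} {B : C} (ξ : NExt E (n + 1) A B), ∃ u, NExtMor E u (𝟙 A) (SF.resExt A n) ξ
  | 0, _, .one f g h => by
    obtain ⟨q, u, hq₁, hq₂⟩ := SF.exists_hom_sesX h (𝟙 A)
    exact ⟨u, NExtMor.one q hq₁ hq₂⟩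
  | n + 1, _, .step f g h ξ => by
    obtain ⟨u', Φ⟩ := SF.exists_nExtMor_resExt A ξ
    obtain ⟨q, u, hq₁, hq₂⟩ := SF.exists_hom_sesX h u'
    exact ⟨u, NExtMor.step q u' hq₁ hq₂ Φ⟩

theorem SyzygyFunctor.extVanish_succ_of_forall_extends (SF : SyzygyFunctor E) {A B : C} :
    ∀ n : ℕ, (∀ u : SF.Kpow (n + 1) A ⟶ B, ∃ g', SF.i (SF.Kpow n A) ≫ g' = u) →
      extVanish E (n + 1) A B
  | 0, hext, .one f g h => by
    obtain ⟨q, u, hq₁, hq₂⟩ := SF.exists_hom_sesX h (𝟙 A)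
    obtain ⟨g', hg'⟩ := hext u
    obtain ⟨s, hs⟩ := E.exists_lift_of_extends (SF.sesX A) h hq₁ hq₂ hg'
    have split : NExtMor E (𝟙 B) (𝟙 A) (trivExt E 0 A B) (.one f g h) :=
      NExtMor.one (biprod.desc f s) (by simp) (E.biprod_desc_comp h hs)
    exact .symm _ _ (.rel _ _ split)
  | m + 1, hext, .step f g h ξ => by
    obtain ⟨u', Φ⟩ := SF.exists_nExtMor_resExt A ξ
    obtain ⟨q, u, hq₁, hq₂⟩ := SF.exists_hom_sesX h u'
    obtain ⟨g', hg'⟩ := hext u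
    obtain ⟨s, hs⟩ := E.exists_lift_of_extends (SF.sesX _) h hq₁ hq₂ hg'
    let splitRes : NExt E (m + 2) A B :=
      .step biprod.inl biprod.snd (E.ses_split B _) (SF.resExt A m)
    have toξ : NExtMor E (𝟙 B) (𝟙 A) splitRes (.step f g h ξ) :=
      NExtMor.step (biprod.desc f s) u' (by simp) (E.biprod_desc_comp h hs) Φ
    have toTriv : NExtMor E (𝟙 B) (𝟙 A) splitRes (trivExt E (m + 1) A B) :=
      NExtMor.step biprod.fst 0 (by simp) (by simp) (SF.nExtMor_resExt_trivN A m)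
    exact .trans _ _ _ (.symm _ _ (.rel _ _ toξ)) (.rel _ _ toTriv)

end Syzygy

lemma bijective_map_of_iso {D : Type w} [Category.{w'} D] (F : D ⥤ D) {A A' : D} (e : A ≅ A')
    (hA : ∀ Y, Function.Bijective (fun f : A ⟶ Y => F.map f)) (Y : D) :
    Function.Bijective (fun f : A' ⟶ Y => F.map f) := by
  have hcomp : (fun f : A' ⟶ Y => F.map f) =
      (F.mapIso e).homFromEquiv ∘ (fun f : A ⟶ Y => F.map f) ∘ e.homFromEquiv.symm := by
    funext f
    simp
  rw [hcomp]
  exact (F.mapIso e).homFromEquiv.bijective.comp ((hA Y).comp e.homFromEquiv.symm.bijective)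

lemma LeftTriangStruct.exists_lift_of_comp_eq_zero {D : Type w} [Category.{w'} D] [Preadditive D]
    [HasZeroObject D] {Om : D ⥤ D} (L : LeftTriangStruct D Om) {T : LTTriangle D Om}
    (hT : T ∈ L.dist) {U : D} (φ : U ⟶ T.obj₂) (hφ : φ ≫ T.m₂ = 0) :
    ∃ ψ : U ⟶ T.obj₁, ψ ≫ T.m₁ = φ := by
  obtain ⟨ψ, hψ, -⟩ := L.complete_mor _ _ (L.contractible U) hT φ 0 (by simp [hφ])
  exact ⟨ψ, by simpa using hψ.symm⟩

section Stable

variable {C : Type u} [Category.{v} C] [Preadditive C] [HasZeroObject C] [HasBinaryBiproducts C]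
  {E : ExactStructure C}

lemma stq_isZero_of_proj [Preadditive (St E)] [(stq E).Additive] {R : C} (hR : E.Proj R) :
    IsZero ((stq E).obj R) := by
  rw [IsZero.iff_id_eq_zero, ← (stq E).map_id, ← (stq E).map_zero R R]
  exact (stq_map_eq_iff E _ _).mpr ⟨R, 𝟙 R, 𝟙 R, hR, by simp⟩

noncomputable def SyzygyFunctor.kpowIso (SF : SyzygyFunctor E) (X : C) :
    (j : ℕ) → (fpow SF.Om j).obj ((stq E).obj X) ≅ (stq E).obj (SF.Kpow j X)
  | 0 => Iso.refl _
  | j + 1 => SF.Om.mapIso (SF.kpowIso X j) ≪≫ SF.iso (SF.Kpow j X)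

variable [Preadditive (St E)] [HasZeroObject (St E)] (SF : SyzygyFunctor E)
  (L : LeftTriangStruct (St E) SF.Om)

lemma exists_mem_dist_of_ses (hdist : L.dist = stdStableTriangles E SF) {R W V : C}
    {k : R ⟶ W} {v : W ⟶ V} (hkv : E.ses k v) :
    ∃ m₀ : SF.Om.obj ((stq E).obj V) ⟶ (stq E).obj R,
      LTTriangle.mk _ _ _ m₀ ((stq E).map k) ((stq E).map v) ∈ L.dist := by
  obtain ⟨q, u, hq₁, hq₂⟩ := SF.exists_hom_sesX hkv (𝟙 V)
  refine ⟨(SF.iso V).hom ≫ (stq E).map u, ?_⟩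
  rw [hdist]
  exact ⟨V, W, R, k, v, hkv, u, q, hq₁, by simpa using hq₂,
    Iso.refl _, Iso.refl _, Iso.refl _, by simp, by simp, by simp⟩

/-- Rotating the standard triangle of `R → W → V` twice gives `ΩW → ΩV → R̲`, and `R̲ = 0`. -/
lemma exists_section_om_map_of_proj [(stq E).Additive] (hdist : L.dist = stdStableTriangles E SF)
    {R W V : C} {k : R ⟶ W} {v : W ⟶ V} (hkv : E.ses k v) (hR : E.Proj R) :
    ∃ j : SF.Om.obj ((stq E).obj V) ⟶ SF.Om.obj ((stq E).obj W),
      j ≫ SF.Om.map ((stq E).map v) = 𝟙 _ := by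
  obtain ⟨m₀, hT⟩ := exists_mem_dist_of_ses SF L hdist hkv
  obtain ⟨ψ, hψ⟩ := L.exists_lift_of_comp_eq_zero (L.rotate _ (L.rotate _ hT)) (𝟙 _)
    ((stq_isZero_of_proj hR).eq_of_tgt _ _)
  exact ⟨-ψ, by simpa using hψ⟩

lemma exists_retraction_of_proj [(stq E).Additive] (hdist : L.dist = stdStableTriangles E SF)
    {R W V : C} {k : R ⟶ W} {v : W ⟶ V} (hkv : E.ses k v) (hR : E.Proj R)
    (hV : ∀ Y, Function.Bijective (fun f : (stq E).obj V ⟶ Y => SF.Om.map f)) :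
    ∃ r : W ⟶ R, k ≫ r = 𝟙 R := by
  obtain ⟨j, hj⟩ := exists_section_om_map_of_proj SF L hdist hkv hR
  obtain ⟨s, hs⟩ := (hV _).2 j
  obtain ⟨σ, rfl⟩ := (stq E).map_surjective s
  replace hs : SF.Om.map ((stq E).map σ) = j := hs
  have hσv : (stq E).map σ ≫ (stq E).map v = 𝟙 _ :=
    (hV _).1 (show SF.Om.map (_ ≫ _) = SF.Om.map (𝟙 _) by
      rw [Functor.map_comp, hs, hj]; exact (SF.Om.map_id _).symm)
  obtain ⟨σ', hσ'⟩ := E.exists_section_of_stq_map_eq hkv (σ := σ) (by simp [hσv])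
  exact E.exists_retraction_of_section hkv hσ'

theorem exists_extension_of_stq_map_eq_zero [(stq E).Additive]
    (hdist : L.dist = stdStableTriangles E SF) {K P N M : C} {i : K ⟶ P} {p : P ⟶ N}
    (hip : E.ses i p) (hN : ∀ Y, Function.Bijective (fun f : (stq E).obj N ⟶ Y => SF.Om.map f))
    {u : K ⟶ M} (hu : (stq E).map u = 0) : ∃ g : P ⟶ M, i ≫ g = u := by
  obtain ⟨R, c, e, hR, hce⟩ := (stq_map_eq_iff E u 0).mp (by rw [hu, Functor.map_zero])
  rw [sub_zero] at hce
  obtain ⟨W, V, h, k, v, hkv, hcomm, ⟨eV⟩⟩ := E.exists_ses_pushout hip c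
  obtain ⟨r, hr⟩ := exists_retraction_of_proj SF L hdist hkv hR
    (bijective_map_of_iso SF.Om ((stq E).mapIso eV) hN)
  exact ⟨h ≫ r ≫ e, by rw [reassoc_of% hcomm, reassoc_of% hr, hce]⟩

end Stable

theorem statement12_general {C : Type u} [Category.{v} C] [Preadditive C] [HasZeroObject C]
    [HasBinaryBiproducts C] (E : ExactStructure C)
    [Preadditive (St E)] [HasZeroObject (St E)]
    (hadd : ∀ (X Y : C) (f g : X ⟶ Y),
      (stq E).map (f + g) = (stq E).map f + (stq E).map g)
    (SF : SyzygyFunctor E) (L : LeftTriangStruct (St E) SF.Om)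
    (hdist : L.dist = stdStableTriangles E SF)
    (X : Set (St E)) (d : ℕ) (hX : ClusterTiltingLT L X d)
    (M₀ M₁ : C) (h₀ : (stq E).obj M₀ ∈ X) (h₁ : (stq E).obj M₁ ∈ X)
    (i : ℕ) (hi : 1 ≤ i) (hi' : i + 1 ≤ d) : extVanish E i M₀ M₁ := by
  have : (stq E).Additive := ⟨hadd _ _ _ _⟩
  obtain ⟨n, rfl⟩ : ∃ n, i = n + 1 := ⟨i - 1, by omega⟩
  refine SF.extVanish_succ_of_forall_extends n fun u => ?_
  refine exists_extension_of_stq_map_eq_zero SF L hdist (SF.sesX _) ?_ ?_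
  · exact bijective_map_of_iso SF.Om (SF.kpowIso M₀ n) (hX.om_bij · _ h₀ n (by omega))
  · have hvanish := hX.hom_vanish _ _ h₁ h₀ (n + 1) (by omega) hi'
      ((SF.kpowIso M₀ (n + 1)).hom ≫ (stq E).map u)
    exact (Preadditive.IsIso.comp_left_eq_zero (SF.kpowIso M₀ (n + 1)).hom ((stq E).map u)).mp
      hvanish

/-- Lemma 6.4. Let `ℰ` be an exact category with enough
projectives, `𝒳` a `d`-cluster tilting subcategory of the stable category `ℰ̲`, and
`ℳ = {E ∈ ℰ : E̲ ∈ 𝒳}`.  Then `Ext^i(M, M') = 0` for all `M, M' ∈ ℳ` and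
`1 ≤ i ≤ d-1`. -/
theorem statement12 {C : Type u} [Category.{v} C] [Preadditive C] [HasZeroObject C]
    [HasBinaryBiproducts C] (E : ExactStructure C) (hEP : EnoughProj E)
    [Preadditive (St E)] [HasZeroObject (St E)]
    (hadd : ∀ (X Y : C) (f g : X ⟶ Y),
      (stq E).map (f + g) = (stq E).map f + (stq E).map g)
    (SF : SyzygyFunctor E) (L : LeftTriangStruct (St E) SF.Om)
    (hdist : L.dist = stdStableTriangles E SF)
    (X : Set (St E)) (d : ℕ) (hd : 0 < d) (hX : ClusterTiltingLT L X d)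
    (M₀ M₁ : C) (h₀ : (stq E).obj M₀ ∈ X) (h₁ : (stq E).obj M₁ ∈ X)
    (i : ℕ) (hi : 1 ≤ i) (hi' : i + 1 ≤ d) : extVanish E i M₀ M₁ :=
  statement12_general E hadd SF L hdist X d hX M₀ M₁ h₀ h₁ i hi hi'

end Paper
end

section
/- Let 𝒞 be a triangulated category with suspension Σ and let ℳ be a d-cluster tilting subcategory of 𝒞. Then the following are equivalent: (a) Σ^d(ℳ) ⊆ ℳ; (b) Σ^{−d}(ℳ) ⊆ ℳ; (c) Hom(M, Σ^i M') = 0 for all M, M' ∈ ℳ and all i ∉ dℤ. -/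
open CategoryTheory CategoryTheory.Limits ZeroObject

universe w w' v u

namespace Paper

section Stmt16Helpers

variable {T : Type w} [Category.{w'} T] [Preadditive T] [HasZeroObject T]

lemma fpow_map_eq (F : T ⥤ T) (n : ℕ) {X Y : T} (f : X ⟶ Y) :
    (fpow F (n + 1)).map f = F.map ((fpow F n).map f) := rfl

lemma fpow_map_zero_iff (Se : T ≌ T) (n : ℕ) {X Y : T} (f : X ⟶ Y) :
    (fpow Se.functor n).map f = 0 ↔ f = 0 := by
  induction n with
  | zero => exact Iff.rfl
  | succ n ih =>
      refine (Se.functor.map_eq_zero_iff (f := (fpow Se.functor n).map f)).trans ?_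
      exact ih

lemma fpow_obj_add (F : T ⥤ T) (m n : ℕ) (X : T) :
    (fpow F m).obj ((fpow F n).obj X) = (fpow F (n + m)).obj X := by
  induction m with
  | zero => rfl
  | succ m ih =>
      show F.obj ((fpow F m).obj ((fpow F n).obj X)) = F.obj ((fpow F (n + m)).obj X)
      rw [ih]

/-- commuting `F^n` past the inverse of the equivalence -/
noncomputable def commFG (Se : T ≌ T) : ∀ (n : ℕ) (B : T),
    (fpow Se.functor n).obj (Se.inverse.obj B) ≅ Se.inverse.obj ((fpow Se.functor n).obj B)
  | 0, _ => Iso.refl _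
  | n + 1, B =>
      Se.functor.mapIso (commFG Se n B) ≪≫ Se.counitIso.app _ ≪≫ Se.unitIso.app _

/-- `F^n (G^n A) ≅ A` -/
noncomputable def cancelFG (Se : T ≌ T) : ∀ (n : ℕ) (A : T),
    (fpow Se.functor n).obj ((fpow Se.inverse n).obj A) ≅ A
  | 0, _ => Iso.refl _
  | n + 1, A =>
      Se.functor.mapIso (commFG Se n ((fpow Se.inverse n).obj A)) ≪≫
        Se.counitIso.app _ ≪≫ cancelFG Se n A

/-- `G^n (F^n A) ≅ A` -/
noncomputable def cancelGF (Se : T ≌ T) (n : ℕ) (A : T) :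
    (fpow Se.inverse n).obj ((fpow Se.functor n).obj A) ≅ A :=
  cancelFG Se.symm n A

lemma zpow_natCast (Se : T ≌ T) (n : ℕ) : zpow Se (n : ℤ) = fpow Se.functor n := rfl

end Stmt16Helpers

end Paper

namespace Paper

/-- Remark 4.2(3). In a triangulated category `𝒞` with suspension
`Σ`, for a `d`-cluster tilting subcategory `ℳ` the following are equivalent:
(a) `Σ^d ℳ ⊆ ℳ`; (b) `Σ^{-d} ℳ ⊆ ℳ`; (c) `Hom(M, Σ^i M') = 0` for all
`M, M' ∈ ℳ` and `i ∉ dℤ`. -/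
theorem statement16 {T : Type w} [Category.{w'} T] [Preadditive T] [HasZeroObject T]
    (Se : T ≌ T) (dist : Set (Tri T Se.functor)) (hTS : TriangStructOn T Se dist)
    (M : Set T) (d : ℕ) (hd : 0 < d) (hM : ClusterTiltingTri T Se.functor M d) :
    ((∀ A ∈ M, (fpow Se.functor d).obj A ∈ M) ↔ (∀ A ∈ M, (fpow Se.inverse d).obj A ∈ M)) ∧
    ((∀ A ∈ M, (fpow Se.functor d).obj A ∈ M) ↔
      (∀ A ∈ M, ∀ B ∈ M, ∀ i : ℤ, ¬ ((d : ℤ) ∣ i) → ∀ f : A ⟶ (zpow Se i).obj B, f = 0)) := by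
  -- membership criteria from eq_left / eq_right
  have hL : ∀ A ∈ M, ∀ B ∈ M, ∀ i : ℕ, 1 ≤ i → i + 1 ≤ d →
      ∀ f : A ⟶ (fpow Se.functor i).obj B, f = 0 := by
    intro A hA B hB i h1 h2 f
    have hA' : A ∈ {Eo : T | ∀ M' ∈ M, ∀ i : ℕ, 1 ≤ i → i + 1 ≤ d →
        ∀ f : Eo ⟶ (fpow Se.functor i).obj M', f = 0} := by
      rw [← hM.eq_left]; exact hA
    exact hA' B hB i h1 h2 f
  have hR : ∀ A ∈ M, ∀ B ∈ M, ∀ i : ℕ, 1 ≤ i → i + 1 ≤ d →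
      ∀ f : B ⟶ (fpow Se.functor i).obj A, f = 0 := by
    intro A hA B hB i h1 h2 f
    have hA' : A ∈ {Eo : T | ∀ M' ∈ M, ∀ i : ℕ, 1 ≤ i → i + 1 ≤ d →
        ∀ f : M' ⟶ (fpow Se.functor i).obj Eo, f = 0} := by
      rw [← hM.eq_right]; exact hA
    exact hA' B hB i h1 h2 f
  have F0 : ∀ (n : ℕ) {X Y : T} {f : X ⟶ Y}, (fpow Se.functor n).map f = 0 → f = 0 :=
    fun n _ _ _ h => (fpow_map_zero_iff Se n _).mp h
  have G0 : ∀ (n : ℕ) {X Y : T} {f : X ⟶ Y}, (fpow Se.inverse n).map f = 0 → f = 0 :=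
    fun n _ _ _ h => (fpow_map_zero_iff Se.symm n _).mp h
  -- iterating (a)
  have haq : (∀ A ∈ M, (fpow Se.functor d).obj A ∈ M) →
      ∀ (q : ℕ), ∀ B ∈ M, (fpow Se.functor (d * q)).obj B ∈ M := by
    intro ha q
    induction q with
    | zero => intro B hB; rw [Nat.mul_zero]; exact hB
    | succ q ih =>
        intro B hB
        rw [Nat.mul_succ, ← fpow_obj_add]
        exact ha _ (ih B hB)
  -- positive integer case of (c)
  have posCase : (∀ A ∈ M, (fpow Se.functor d).obj A ∈ M) →
      ∀ A ∈ M, ∀ B ∈ M, ∀ n : ℕ, ¬ (d ∣ n) →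
        ∀ f : A ⟶ (fpow Se.functor n).obj B, f = 0 := by
    intro ha A hA B hB n hn
    have hr1 : 1 ≤ n % d := by
      rcases Nat.eq_zero_or_pos (n % d) with h | h
      · exact absurd (Nat.dvd_of_mod_eq_zero h) hn
      · exact h
    have hr2 : n % d + 1 ≤ d := Nat.mod_lt n hd
    have hkey := hL A hA _ (haq ha (n / d) B hB) (n % d) hr1 hr2
    rw [fpow_obj_add, Nat.div_add_mod n d] at hkey
    exact hkey
  -- (a) → (c)
  have hc_of_ha : (∀ A ∈ M, (fpow Se.functor d).obj A ∈ M) →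
      ∀ A ∈ M, ∀ B ∈ M, ∀ i : ℤ, ¬ ((d : ℤ) ∣ i) →
        ∀ f : A ⟶ (zpow Se i).obj B, f = 0 := by
    intro ha A hA B hB i hi f
    cases i with
    | ofNat n =>
        have hn : ¬ d ∣ n := fun h => hi (Int.natCast_dvd_natCast.mpr h)
        exact posCase ha A hA B hB n hn f
    | negSucc n =>
        have hdm : ¬ d ∣ (n + 1) := by
          intro h
          apply hi
          rw [Int.negSucc_eq]
          exact (Int.natCast_dvd_natCast.mpr h).neg_right
        have e := cancelFG Se (n + 1) B
        have hle : n + 1 ≤ d * (n + 1) := Nat.le_mul_of_pos_left (n + 1) hd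
        have hds : ¬ d ∣ (d * (n + 1) - (n + 1)) := by
          intro h
          apply hdm
          have h1 : d ∣ d * (n + 1) := Dvd.intro (n + 1) rfl
          have h2 := Nat.dvd_sub h1 h
          rwa [Nat.sub_sub_self hle] at h2
        obtain ⟨s, hs⟩ : ∃ s, d * (n + 1) - (n + 1) = s := ⟨_, rfl⟩
        rw [hs] at hds
        have hkey := posCase ha _ (haq ha (n + 1) A hA) B hB s hds
        have hms : d * (n + 1) = (n + 1) + s := by omega
        rw [hms, ← fpow_obj_add Se.functor s (n + 1) A] at hkey
        have hzg : (fpow Se.functor s).map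
            ((fpow Se.functor (n + 1)).map f ≫ e.hom) = 0 := hkey _
        have hg0 : (fpow Se.functor (n + 1)).map f ≫ e.hom = 0 :=
          F0 _ hzg
        have hmf : (fpow Se.functor (n + 1)).map f = 0 := by
          have h2 : (fpow Se.functor (n + 1)).map f
              = ((fpow Se.functor (n + 1)).map f ≫ e.hom) ≫ e.inv := by
            exact ((Category.assoc _ _ _).trans ((whisker_eq _ e.hom_inv_id).trans (Category.comp_id _))).symm
          rw [h2, hg0, Limits.zero_comp]; rfl
        exact F0 _ hmf
  -- (c) → (b)
  have hb_of_hc : (∀ A ∈ M, ∀ B ∈ M, ∀ i : ℤ, ¬ ((d : ℤ) ∣ i) →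
        ∀ f : A ⟶ (zpow Se i).obj B, f = 0) →
      ∀ A ∈ M, (fpow Se.inverse d).obj A ∈ M := by
    intro hc A hA
    rw [hM.eq_left]
    intro M' hM' i h1 h2 f
    have hdvd : ¬ ((d : ℤ) ∣ ((i + d : ℕ) : ℤ)) := by
      rw [Int.natCast_dvd_natCast]
      intro h
      have h' : d ∣ i := (Nat.dvd_add_self_right).mp h
      have := Nat.le_of_dvd (by omega) h'
      omega
    have hkey := hc A hA M' hM' ((i + d : ℕ) : ℤ) hdvd
    rw [zpow_natCast, ← fpow_obj_add] at hkey
    have e := cancelFG Se d A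
    have h0 : e.inv ≫ (fpow Se.functor d).map f = 0 := hkey _
    have hmf : (fpow Se.functor d).map f = 0 := by
      have h2 : (fpow Se.functor d).map f = e.hom ≫ (e.inv ≫ (fpow Se.functor d).map f) := by
        rw [← Category.assoc, e.hom_inv_id]; exact (Category.id_comp _).symm
      rw [h2, h0, Limits.comp_zero]
    exact F0 _ hmf
  -- (b) → (a)
  have ha_of_hb : (∀ A ∈ M, (fpow Se.inverse d).obj A ∈ M) →
      ∀ A ∈ M, (fpow Se.functor d).obj A ∈ M := by
    intro hb A hA
    rw [hM.eq_right]
    intro M' hM' i h1 h2 f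
    have hsw : (fpow Se.functor i).obj ((fpow Se.functor d).obj A)
        = (fpow Se.functor d).obj ((fpow Se.functor i).obj A) := by
      rw [fpow_obj_add, fpow_obj_add, Nat.add_comm]
    have hkey := hR A hA _ (hb M' hM') i h1 h2
    have e := cancelGF Se d ((fpow Se.functor i).obj A)
    have h0 : (fpow Se.inverse d).map (f ≫ eqToHom hsw) ≫ e.hom = 0 := hkey _
    have h1' : (fpow Se.inverse d).map (f ≫ eqToHom hsw) = 0 := by
      have h2 : (fpow Se.inverse d).map (f ≫ eqToHom hsw)
          = ((fpow Se.inverse d).map (f ≫ eqToHom hsw) ≫ e.hom) ≫ e.inv := by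
        rw [Category.assoc, e.hom_inv_id]; exact (Category.comp_id _).symm
      rw [h2, h0, Limits.zero_comp]
    have h2' : f ≫ eqToHom hsw = 0 := G0 _ h1'
    have : f = (f ≫ eqToHom hsw) ≫ eqToHom hsw.symm := by simp
    rw [this, h2', Limits.zero_comp]
  -- (c) → (a)
  have ha_of_hc : (∀ A ∈ M, ∀ B ∈ M, ∀ i : ℤ, ¬ ((d : ℤ) ∣ i) →
        ∀ f : A ⟶ (zpow Se i).obj B, f = 0) →
      ∀ A ∈ M, (fpow Se.functor d).obj A ∈ M := by
    intro hc A hA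
    rw [hM.eq_right]
    intro M' hM' i h1 h2 f
    have hdvd : ¬ ((d : ℤ) ∣ ((d + i : ℕ) : ℤ)) := by
      rw [Int.natCast_dvd_natCast]
      intro h
      have h' : d ∣ i := (Nat.dvd_add_right (dvd_refl d)).mp h
      have := Nat.le_of_dvd (by omega) h'
      omega
    have hkey := hc M' hM' A hA ((d + i : ℕ) : ℤ) hdvd
    rw [zpow_natCast, ← fpow_obj_add] at hkey
    exact hkey f
  exact ⟨⟨fun ha => hb_of_hc (hc_of_ha ha), ha_of_hb⟩,
    ⟨hc_of_ha, ha_of_hc⟩⟩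


end Paper
end

section
/- Let ℰ be an exact category with enough projectives. The essential image of the fully faithful triangulated functor 𝒢𝒫(ℰ)̲ → ℤℰ̲ from the stable category of Gorenstein projective objects into the stabilization of ℰ̲ consists exactly of the objects (E̲, n) such that E has finite Gorenstein projective dimension. In particular, the functor is an equivalence if and only if every object of ℰ has finite Gorenstein projective dimension. -/
open CategoryTheory CategoryTheory.Limits ZeroObject

universe w w' v u

/-!
An isomorphism `(X̲, n) ≅ (G̲, 0)` in the stabilization is represented by maps
`Ω^a X̲ ⇄ Ω^b G̲` whose two composites become identities after applying `Ω` often enough;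
so some `Ω^A X̲` is isomorphic to some `Ω^B G̲`, which is again stably Gorenstein projective
because syzygies of Gorenstein projectives are Gorenstein projective.

Conversely, by Schanuel's lemma a conflation `0 → W → P → Y → 0` with `P` projective
identifies `(Y̲, t + 1)` with `(W̲, t)`. Hence `(X̲, n) ≅ (W̲, n - m)` for an `m`-th syzygy `W`
of `X`, and walking along a totally acyclic complex moves any `(G̲, t)` with `G` Gorenstein
projective to degree `0`.
-/

namespace Paper

section Raise

variable {D : Type*} [Category D] (F : D ⥤ D)

lemma raiseN_id (j a : ℕ) (X : D) :
    raiseN F j (𝟙 ((fpow F a).obj X)) = 𝟙 ((fpow F (a + j)).obj X) := by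
  induction j with
  | zero => rfl
  | succ j ih => exact (congrArg F.map ih).trans (F.map_id _)

lemma raiseN_comp (j : ℕ) {X Y Z : D} {a b c : ℕ}
    (f : (fpow F a).obj X ⟶ (fpow F b).obj Y) (g : (fpow F b).obj Y ⟶ (fpow F c).obj Z) :
    raiseN F j (f ≫ g) = raiseN F j f ≫ raiseN F j g := by
  induction j with
  | zero => rfl
  | succ j ih => exact (congrArg F.map ih).trans (F.map_comp _ _)

lemma raiseN_eq_id_of_le {X : D} {a j N : ℕ} {f : (fpow F a).obj X ⟶ (fpow F a).obj X}
    (hf : raiseN F j f = 𝟙 _) (hN : j ≤ N) : raiseN F N f = 𝟙 _ := by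
  obtain ⟨i, rfl⟩ := Nat.exists_eq_add_of_le hN
  clear hN
  induction i with
  | zero => exact hf
  | succ i ih => exact (congrArg F.map ih).trans (F.map_id _)

end Raise

namespace IsStabilization

variable {D : Type u'} [Category.{v'} D] [Preadditive D] {F : D ⥤ D}
  {S : Type w} [Category.{w'} S] [Preadditive S] (st : IsStabilization F S)

lemma lift_raiseN (j : ℕ) {X Y : D} {a b : ℕ} {m n : ℤ}
    (h : (a : ℤ) + n = b + m) (h' : ((a + j : ℕ) : ℤ) + n = ((b + j : ℕ) : ℤ) + m)
    (f : (fpow F a).obj X ⟶ (fpow F b).obj Y) :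
    st.lift (a + j) (b + j) m n h' (raiseN F j f) = st.lift a b m n h f := by
  induction j with
  | zero => rfl
  | succ j ih =>
      exact (st.lift_raise (a + j) (b + j) m n (by push_cast at h' ⊢; omega) h' _).trans
        (ih (by push_cast at h' ⊢; omega))

lemma exists_lift_eq_lift_of_le {X Y : D} {a b a' : ℕ} {m n : ℤ} (h : (a : ℤ) + n = b + m)
    (f : (fpow F a).obj X ⟶ (fpow F b).obj Y) (ha : a ≤ a') :
    ∃ (b' : ℕ) (h' : (a' : ℤ) + n = b' + m) (f' : (fpow F a').obj X ⟶ (fpow F b').obj Y),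
      st.lift a b m n h f = st.lift a' b' m n h' f' := by
  obtain ⟨j, rfl⟩ := Nat.exists_eq_add_of_le ha
  exact ⟨b + j, by push_cast; omega, raiseN F j f, (st.lift_raiseN j h _ f).symm⟩

lemma exists_lift_eq_lift_of_comp {X Y Z : D} {m n p : ℤ}
    (φ : st.obj X m ⟶ st.obj Y n) (ψ : st.obj Y n ⟶ st.obj Z p) :
    ∃ (a b c : ℕ) (h₁ : (a : ℤ) + n = b + m) (h₂ : (b : ℤ) + p = c + n)
      (f : (fpow F a).obj X ⟶ (fpow F b).obj Y) (g : (fpow F b).obj Y ⟶ (fpow F c).obj Z),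
      φ = st.lift a b m n h₁ f ∧ ψ = st.lift b c n p h₂ g := by
  obtain ⟨a, b, h₁, f, rfl⟩ := st.lift_surj φ
  obtain ⟨b', c, h₂, g, rfl⟩ := st.lift_surj ψ
  obtain ⟨c', h₂', g', hg⟩ := st.exists_lift_eq_lift_of_le h₂ g (Nat.le_add_left b' b)
  exact ⟨a + b', b + b', c', by push_cast; omega, h₂', raiseN F b' f, g',
    (st.lift_raiseN b' h₁ _ f).symm, hg⟩

lemma exists_raiseN_eq_id {X : D} {a : ℕ} {m : ℤ} (h : (a : ℤ) + m = a + m)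
    (f : (fpow F a).obj X ⟶ (fpow F a).obj X) (hf : st.lift a a m m h f = 𝟙 _) :
    ∃ j, raiseN F j f = 𝟙 _ := by
  rw [← st.lift_id a m h] at hf
  obtain ⟨j, j', -, hj, hfj⟩ := st.lift_inj a a a a m m h h f (𝟙 _) hf
  obtain rfl : j = j' := by omega
  exact ⟨j, (eq_of_heq hfj).trans (raiseN_id F j a X)⟩

theorem exists_fpow_iso_of_iso {X Y : D} {m n : ℤ} (φ : st.obj X m ≅ st.obj Y n) :
    ∃ a b : ℕ, Nonempty ((fpow F a).obj X ≅ (fpow F b).obj Y) := by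
  obtain ⟨a, b, c, h₁, h₂, f, g, hf, hg⟩ := st.exists_lift_eq_lift_of_comp φ.hom φ.inv
  obtain rfl : a = c := by omega
  obtain ⟨j, hj⟩ := st.exists_raiseN_eq_id (by omega) (f ≫ g) (by
    rw [← st.lift_comp a b a m n m h₁ h₂, ← hf, ← hg, φ.hom_inv_id])
  obtain ⟨k, hk⟩ := st.exists_raiseN_eq_id (by omega) (g ≫ f) (by
    rw [← st.lift_comp b a b n m n h₂ h₁, ← hf, ← hg, φ.inv_hom_id])
  refine ⟨a + (j + k), b + (j + k), ⟨⟨raiseN F (j + k) f, raiseN F (j + k) g, ?_, ?_⟩⟩⟩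
  · rw [← raiseN_comp]; exact raiseN_eq_id_of_le F hj (Nat.le_add_right j k)
  · rw [← raiseN_comp]; exact raiseN_eq_id_of_le F hk (Nat.le_add_left k j)

noncomputable def degreeFunctor (m : ℤ) : D ⥤ S where
  obj A := st.obj A m
  map f := st.lift 0 0 m m rfl f
  map_id _ := st.lift_id 0 m rfl
  map_comp f g := (st.lift_comp 0 0 0 m m m rfl rfl rfl f g).symm

noncomputable def shiftIso (A : D) (m : ℤ) : st.obj A (m + 1) ≅ st.obj (F.obj A) m where
  hom := st.lift 1 0 (m + 1) m (by push_cast; ring) (𝟙 (F.obj A))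
  inv := st.lift 0 1 m (m + 1) (by push_cast; ring) (𝟙 (F.obj A))
  hom_inv_id := by
    rw [st.lift_comp 1 0 1 (m + 1) m (m + 1) _ _ rfl (𝟙 (F.obj A)) (𝟙 (F.obj A))]
    exact (congrArg (st.lift 1 1 (m + 1) (m + 1) rfl) (Category.id_comp _)).trans
      (st.lift_id 1 (m + 1) rfl)
  inv_hom_id := by
    rw [st.lift_comp 0 1 0 m (m + 1) m _ _ rfl (𝟙 (F.obj A)) (𝟙 (F.obj A))]
    exact (congrArg (st.lift 0 0 m m rfl) (Category.id_comp _)).trans (st.lift_id 0 m rfl)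

end IsStabilization

section Exact

variable {C : Type*} [Category C] [Preadditive C] [HasZeroObject C] [HasBinaryBiproducts C]
  {E : ExactStructure C}

lemma ExactStructure.exists_lift_of_comp_eq_zero {W P Y A : C} {i : W ⟶ P} {p : P ⟶ Y}
    (hs : E.ses i p) (h : A ⟶ P) (hh : h ≫ p = 0) : ∃ k : A ⟶ W, k ≫ i = h :=
  ⟨_, (KernelFork.IsLimit.lift' (E.isKernel hs).some h hh).2⟩

lemma ExactStructure.ses_comp_eqToHom {X Y Z Z' : C} {f : X ⟶ Y} {g : Y ⟶ Z}
    (hs : E.ses f g) (h : Z = Z') : E.ses f (g ≫ eqToHom h) := by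
  subst h
  simpa using hs

/-- `1 - g` factors as `t ≫ i` through the kernel `i` of `p`, and then `k - 1 = i ≫ (-t)`. -/
lemma stq_map_eq_id_of_comm {W P Y : C} {i : W ⟶ P} {p : P ⟶ Y} (hs : E.ses i p)
    (hP : E.Proj P) {k : W ⟶ W} {g : P ⟶ P} (hg : g ≫ p = p) (hk : k ≫ i = i ≫ g) :
    (stq E).map k = 𝟙 _ := by
  obtain ⟨t, ht⟩ := E.exists_lift_of_comp_eq_zero hs (𝟙 P - g) (by simp [hg])
  have : Mono i := mono_of_isLimit_fork (E.isKernel hs).some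
  have hkt : k - 𝟙 W = i ≫ (-t) := by
    rw [← cancel_mono i]
    simp only [Preadditive.sub_comp, hk, Category.id_comp, Preadditive.comp_neg,
      Preadditive.neg_comp, Category.assoc, ht, Preadditive.comp_sub, Category.comp_id]
    abel
  exact (CategoryTheory.Quotient.sound (stableRel E) ⟨P, i, -t, hP, hkt.symm⟩).trans
    ((stq E).map_id W)

theorem schanuel {W P Y W' P' : C} {i : W ⟶ P} {p : P ⟶ Y} {i' : W' ⟶ P'} {p' : P' ⟶ Y}
    (hs : E.ses i p) (hs' : E.ses i' p') (hP : E.Proj P) (hP' : E.Proj P') :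
    Nonempty ((stq E).obj W ≅ (stq E).obj W') := by
  obtain ⟨g, hg⟩ := hP p' ⟨W', i', hs'⟩ p
  obtain ⟨g', hg'⟩ := hP' p ⟨W, i, hs⟩ p'
  obtain ⟨k, hk⟩ := E.exists_lift_of_comp_eq_zero hs' (i ≫ g)
    (by rw [Category.assoc, hg, E.comp_zero hs])
  obtain ⟨k', hk'⟩ := E.exists_lift_of_comp_eq_zero hs (i' ≫ g')
    (by rw [Category.assoc, hg', E.comp_zero hs'])
  refine ⟨⟨(stq E).map k, (stq E).map k', ?_, ?_⟩⟩
  · rw [← Functor.map_comp]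
    exact stq_map_eq_id_of_comm hs hP (g := g ≫ g') (by simp [hg, hg'])
      (by simp only [Category.assoc, hk', reassoc_of% hk])
  · rw [← Functor.map_comp]
    exact stq_map_eq_id_of_comm hs' hP' (g := g' ≫ g) (by simp [hg, hg'])
      (by simp only [Category.assoc, hk, reassoc_of% hk'])

lemma gorensteinProj_shift {Gs Ps : ℤ → C} {g : ∀ i, Gs i ⟶ Ps i} {p : ∀ i, Ps i ⟶ Gs (i - 1)}
    (hall : ∀ i, E.Proj (Ps i) ∧ E.ses (g i) (p i) ∧
      ∀ Q : C, E.Proj Q → ∀ f : Gs i ⟶ Q, ∃ h : Ps i ⟶ Q, g i ≫ h = f) (k : ℤ) :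
    GorensteinProj E (Gs k) :=
  ⟨fun i => Gs (i + k), fun i => Ps (i + k), fun i => g (i + k),
    fun i => p (i + k) ≫ eqToHom (congrArg Gs (by ring)), congrArg Gs (zero_add k),
    fun i => ⟨(hall (i + k)).1, E.ses_comp_eqToHom (hall (i + k)).2.1 _, (hall (i + k)).2.2⟩⟩

lemma GorensteinProj.exists_conflation_to {G : C} (hG : GorensteinProj E G) :
    ∃ (G₁ P : C) (i : G₁ ⟶ P) (p : P ⟶ G), E.Proj P ∧ E.ses i p ∧ GorensteinProj E G₁ := by
  obtain ⟨Gs, Ps, g, p, rfl, hall⟩ := hG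
  exact ⟨Gs 1, Ps 1, g 1, p 1 ≫ eqToHom (congrArg Gs (sub_self 1)), (hall 1).1,
    E.ses_comp_eqToHom (hall 1).2.1 _, gorensteinProj_shift hall 1⟩

lemma GorensteinProj.exists_conflation_from {G : C} (hG : GorensteinProj E G) :
    ∃ (G₂ P : C) (i : G ⟶ P) (p : P ⟶ G₂), E.Proj P ∧ E.ses i p ∧ GorensteinProj E G₂ := by
  obtain ⟨Gs, Ps, g, p, rfl, hall⟩ := hG
  exact ⟨Gs (0 - 1), Ps 0, g 0, p 0, (hall 0).1, (hall 0).2.1, gorensteinProj_shift hall _⟩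

end Exact

namespace SyzygyFunctor

variable {C : Type*} [Category C] [Preadditive C] [HasZeroObject C] [HasBinaryBiproducts C]
  {E : ExactStructure C} (SF : SyzygyFunctor E)

lemma nonempty_iso_of_ses {W P Y : C} {i : W ⟶ P} {p : P ⟶ Y} (hs : E.ses i p)
    (hP : E.Proj P) : Nonempty (SF.Om.obj ((stq E).obj Y) ≅ (stq E).obj W) :=
  (schanuel (SF.sesX Y) hs (SF.projP Y) hP).map (SF.iso Y ≪≫ ·)

lemma exists_syz_fpow_iso (A : ℕ) (X : C) :
    ∃ W, Syz E A X W ∧ Nonempty ((fpow SF.Om A).obj ((stq E).obj X) ≅ (stq E).obj W) := by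
  induction A with
  | zero => exact ⟨X, Syz.zero X, ⟨Iso.refl _⟩⟩
  | succ A ih =>
      obtain ⟨W, hW, ⟨e⟩⟩ := ih
      exact ⟨SF.K W, hW.succ (SF.projP W) (SF.i W) (SF.p W) (SF.sesX W),
        ⟨SF.Om.mapIso e ≪≫ SF.iso W⟩⟩

lemma exists_gorensteinProj_fpow_iso {G : C} (hG : GorensteinProj E G) (B : ℕ) :
    ∃ G', GorensteinProj E G' ∧
      Nonempty ((fpow SF.Om B).obj ((stq E).obj G) ≅ (stq E).obj G') := by
  induction B with
  | zero => exact ⟨G, hG, ⟨Iso.refl _⟩⟩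
  | succ B ih =>
      obtain ⟨G', hG', ⟨e⟩⟩ := ih
      obtain ⟨G₁, P, i, p, hP, hs, hG₁⟩ := hG'.exists_conflation_to
      obtain ⟨e₁⟩ := SF.nonempty_iso_of_ses hs hP
      exact ⟨G₁, hG₁, ⟨SF.Om.mapIso e ≪≫ e₁⟩⟩

end SyzygyFunctor

section Stabilization

variable {C : Type*} [Category C] [Preadditive C] [HasZeroObject C] [HasBinaryBiproducts C]
  {E : ExactStructure C} {SF : SyzygyFunctor E} [Preadditive (St E)]
  {S : Type*} [Category S] [Preadditive S] (st : IsStabilization SF.Om S)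

lemma nonempty_obj_iso_of_ses {W P Y : C} {i : W ⟶ P} {p : P ⟶ Y} (hs : E.ses i p)
    (hP : E.Proj P) {s t : ℤ} (h : s = t + 1) :
    Nonempty (st.obj ((stq E).obj Y) s ≅ st.obj ((stq E).obj W) t) := by
  subst h
  obtain ⟨e⟩ := SF.nonempty_iso_of_ses hs hP
  exact ⟨st.shiftIso _ t ≪≫ (st.degreeFunctor t).mapIso e⟩

lemma nonempty_obj_iso_of_syz {m : ℕ} {X W : C} (hW : Syz E m X W) {s t : ℤ} (h : s = t + m) :
    Nonempty (st.obj ((stq E).obj X) s ≅ st.obj ((stq E).obj W) t) := by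
  induction hW generalizing s t with
  | zero X => subst h; exact ⟨eqToIso (by simp)⟩
  | succ _ hP w p hs ih =>
      obtain ⟨e₁⟩ := ih (s := s) (t := t + 1) (by push_cast at h; omega)
      obtain ⟨e₂⟩ := nonempty_obj_iso_of_ses st hs hP rfl
      exact ⟨e₁ ≪≫ e₂⟩

lemma exists_gorensteinProj_obj_iso (t : ℤ) {G : C} (hG : GorensteinProj E G) :
    ∃ G', GorensteinProj E G' ∧
      Nonempty (st.obj ((stq E).obj G) t ≅ st.obj ((stq E).obj G') 0) := by
  induction t using Int.induction_on generalizing G with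
  | zero => exact ⟨G, hG, ⟨Iso.refl _⟩⟩
  | succ t ih =>
      obtain ⟨G₁, P, i, p, hP, hs, hG₁⟩ := hG.exists_conflation_to
      obtain ⟨e⟩ := nonempty_obj_iso_of_ses st hs hP rfl
      obtain ⟨G', hG', ⟨e'⟩⟩ := ih hG₁
      exact ⟨G', hG', ⟨e ≪≫ e'⟩⟩
  | pred t ih =>
      obtain ⟨G₂, P, i, p, hP, hs, hG₂⟩ := hG.exists_conflation_from
      obtain ⟨e⟩ := nonempty_obj_iso_of_ses st hs hP (s := -(t : ℤ)) (t := -(t : ℤ) - 1) (by ring)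
      obtain ⟨G', hG', ⟨e'⟩⟩ := ih hG₂
      exact ⟨G', hG', ⟨e.symm ≪≫ e'⟩⟩

theorem exists_gorensteinProj_obj_iso_iff (X : C) (n : ℤ) :
    (∃ G : C, GorensteinProj E G ∧
      Nonempty (st.obj ((stq E).obj X) n ≅ st.obj ((stq E).obj G) 0)) ↔ FiniteGPdim E X := by
  refine ⟨fun ⟨G, hG, ⟨φ⟩⟩ => ?_, fun ⟨m, W, G, hW, hG, ⟨e⟩⟩ => ?_⟩
  · obtain ⟨A, B, ⟨e⟩⟩ := st.exists_fpow_iso_of_iso φ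
    obtain ⟨W, hW, ⟨eW⟩⟩ := SF.exists_syz_fpow_iso A X
    obtain ⟨G', hG', ⟨eG⟩⟩ := SF.exists_gorensteinProj_fpow_iso hG B
    exact ⟨A, W, G', hW, hG', ⟨eW.symm ≪≫ e ≪≫ eG⟩⟩
  · obtain ⟨eW⟩ := nonempty_obj_iso_of_syz st hW (t := n - m) (by ring)
    obtain ⟨G', hG', ⟨eG⟩⟩ := exists_gorensteinProj_obj_iso st (n - m) hG
    exact ⟨G', hG', ⟨eW ≪≫ (st.degreeFunctor (n - m)).mapIso e ≪≫ eG⟩⟩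

end Stabilization

theorem statement17_general {C : Type u} [Category.{v} C] [Preadditive C] [HasZeroObject C]
    [HasBinaryBiproducts C] (E : ExactStructure C)
    [Preadditive (St E)]
    (SF : SyzygyFunctor E)
    {S : Type w} [Category.{w'} S] [Preadditive S] (st : IsStabilization SF.Om S) :
    (∀ (X : C) (n : ℤ),
      (∃ G : C, GorensteinProj E G ∧
        Nonempty (st.obj ((stq E).obj X) n ≅ st.obj ((stq E).obj G) 0)) ↔ FiniteGPdim E X) ∧
    ((∀ s : S, ∃ G : C, GorensteinProj E G ∧
        Nonempty (s ≅ st.obj ((stq E).obj G) 0)) ↔ ∀ X : C, FiniteGPdim E X) := by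
  refine ⟨exists_gorensteinProj_obj_iso_iff st,
    fun h X => (exists_gorensteinProj_obj_iso_iff st X 0).mp (h _), fun h s => ?_⟩
  obtain ⟨Y, n, ⟨eY⟩⟩ := st.dense s
  obtain ⟨G, hG, ⟨φ⟩⟩ := (exists_gorensteinProj_obj_iso_iff st Y.as n).mpr (h Y.as)
  exact ⟨G, hG, ⟨eY ≪≫ φ⟩⟩

/-- Lemma 7.1, Buchweitz. Let `ℰ` be an exact category with enough
projectives.  The essential image of the fully faithful triangulated functor
`𝒢𝒫(ℰ)̲ → ℤℰ̲`, `G̲ ↦ (G̲, 0)`, consists exactly of the objects `(E̲, n)` such that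
`E` has finite Gorenstein projective dimension; in particular the functor is an
equivalence iff every object of `ℰ` has finite Gorenstein projective dimension. -/
theorem statement17 {C : Type u} [Category.{v} C] [Preadditive C] [HasZeroObject C]
    [HasBinaryBiproducts C] (E : ExactStructure C) (hEP : EnoughProj E)
    [Preadditive (St E)]
    (hadd : ∀ (X Y : C) (f g : X ⟶ Y),
      (stq E).map (f + g) = (stq E).map f + (stq E).map g)
    (SF : SyzygyFunctor E)
    {S : Type w} [Category.{w'} S] [Preadditive S] (st : IsStabilization SF.Om S) :
    (∀ (X : C) (n : ℤ),
      (∃ G : C, GorensteinProj E G ∧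
        Nonempty (st.obj ((stq E).obj X) n ≅ st.obj ((stq E).obj G) 0)) ↔ FiniteGPdim E X) ∧
    ((∀ s : S, ∃ G : C, GorensteinProj E G ∧
        Nonempty (s ≅ st.obj ((stq E).obj G) 0)) ↔ ∀ X : C, FiniteGPdim E X) :=
  statement17_general E SF st

end Paper
end
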